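/- The Dirac bracket associated with the second class constraints θ_i reduces, on the constraint surface p = ρ(x), to the Poisson bracket of the symplectic form ω on the base: for all smooth f, g : U × ℝ^N → ℝ and every x ∈ U, {f,g}_D(x, ρ(x)) = Σ_{i,j} ω^{ij}(x) (∂f_0/∂x^i)(x) (∂g_0/∂x^j)(x), where f_0(x) := f(x, ρ(x)) and g_0(x) := g(x, ρ(x)). -/

import Mathlib

/-!
Context: `U ⊆ ℝ^N` open, `ρ_i : U → ℝ` smooth, `ω_{ij} = ∂_i ρ_j − ∂_j ρ_i`
invertible on `U` with inverse `ω^{ij}`.  On `U × ℝ^N` with the canonical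
Poisson bracket, `θ_i(x,p) = ρ_i(x) − p_i`, and the Dirac bracket is
`{f,g}_D = {f,g} − Σ {f,θ_i} ω^{ij} {θ_j,g}`.

STATEMENT 19: on the constraint surface `p = ρ(x)`, the Dirac bracket reduces to
`{f,g}_D(x,ρ(x)) = Σ ω^{ij}(x) ∂_i f_0 ∂_j g_0`, where `f_0(x) = f(x,ρ(x))`.
-/

open scoped BigOperators

/-- Partial derivative `∂f/∂x^i` of a function on `ℝ^N`. -/
noncomputable def pd {N : ℕ} (i : Fin N) (f : (Fin N → ℝ) → ℝ) : (Fin N → ℝ) → ℝ :=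
  fun x => fderiv ℝ f x (Pi.single i 1)

/-- `∂f/∂x^i` for a function of `(x,p) ∈ ℝ^N × ℝ^N`. -/
noncomputable def pdx {N : ℕ} (i : Fin N)
    (f : (Fin N → ℝ) × (Fin N → ℝ) → ℝ) : (Fin N → ℝ) × (Fin N → ℝ) → ℝ :=
  fun z => fderiv ℝ f z (Pi.single i 1, 0)

/-- `∂f/∂p_i` for a function of `(x,p) ∈ ℝ^N × ℝ^N`. -/
noncomputable def pdp {N : ℕ} (i : Fin N)
    (f : (Fin N → ℝ) × (Fin N → ℝ) → ℝ) : (Fin N → ℝ) × (Fin N → ℝ) → ℝ :=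
  fun z => fderiv ℝ f z (0, Pi.single i 1)

/-- The canonical Poisson bracket on `ℝ^N × ℝ^N`. -/
noncomputable def canPB {N : ℕ} (f g : (Fin N → ℝ) × (Fin N → ℝ) → ℝ) :
    (Fin N → ℝ) × (Fin N → ℝ) → ℝ :=
  fun z => ∑ i, (pdx i f z * pdp i g z - pdp i f z * pdx i g z)

/-- The Dirac bracket associated with the constraints `θ_i` and the inverse matrix `ω'`. -/
noncomputable def diracPB {N : ℕ} (ω' : Fin N → Fin N → (Fin N → ℝ) → ℝ)
    (θ : Fin N → (Fin N → ℝ) × (Fin N → ℝ) → ℝ)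
    (f g : (Fin N → ℝ) × (Fin N → ℝ) → ℝ) : (Fin N → ℝ) × (Fin N → ℝ) → ℝ :=
  fun z => canPB f g z - ∑ i, ∑ j, canPB f (θ i) z * ω' i j z.1 * canPB (θ j) g z



lemma key_alg {N : ℕ} (Fx Fp Gx Gp : Fin N → ℝ) (D w' : Fin N → Fin N → ℝ)
    (hL : ∀ i l, (∑ j, w' i j * (D l j - D j l)) = -(if i = l then (1:ℝ) else 0))
    (hR : ∀ k j, (∑ i, (D k i - D i k) * w' i j) = if k = j then (1:ℝ) else 0) :
    (∑ i, (Fx i * Gp i - Fp i * Gx i))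
      + ∑ i, ∑ j, (Fx i + ∑ m, Fp m * D m i) * w' i j * (Gx j + ∑ m, D m j * Gp m)
    = ∑ i, ∑ j, w' i j * (Fx i + ∑ m, D i m * Fp m) * (Gx j + ∑ m, D j m * Gp m) := by
  set A : Fin N → ℝ := fun i => Fx i + ∑ m, Fp m * D m i with hA
  set B : Fin N → ℝ := fun j => Gx j + ∑ m, D m j * Gp m with hB
  set P : Fin N → ℝ := fun i => ∑ m, Fp m * (D m i - D i m) with hP
  set Q : Fin N → ℝ := fun j => ∑ m, (D m j - D j m) * Gp m with hQ
  have hAP : ∀ i, A i - P i = Fx i + ∑ m, D i m * Fp m := by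
    intro i
    simp only [hA, hP]
    rw [add_sub_assoc, ← Finset.sum_sub_distrib]
    congr 1
    exact Finset.sum_congr rfl (fun m _ => by ring)
  have hBQ : ∀ j, B j - Q j = Gx j + ∑ m, D j m * Gp m := by
    intro j
    simp only [hB, hQ]
    rw [add_sub_assoc, ← Finset.sum_sub_distrib]
    congr 1
    exact Finset.sum_congr rfl (fun m _ => by ring)
  have hwQ : ∀ i, (∑ j, w' i j * Q j) = -Gp i := by
    intro i
    calc (∑ j, w' i j * Q j)
        = ∑ j, ∑ m, (w' i j * (D m j - D j m)) * Gp m := by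
          refine Finset.sum_congr rfl fun j _ => ?_
          simp only [hQ, Finset.mul_sum]
          exact Finset.sum_congr rfl (fun m _ => by ring)
      _ = ∑ m, (∑ j, w' i j * (D m j - D j m)) * Gp m := by
          rw [Finset.sum_comm]
          exact Finset.sum_congr rfl fun m _ => (Finset.sum_mul ..).symm
      _ = ∑ m, (-(if i = m then (1:ℝ) else 0)) * Gp m :=
          Finset.sum_congr rfl fun m _ => by rw [hL]
      _ = -Gp i := by simp
  have hPw : ∀ j, (∑ i, P i * w' i j) = Fp j := by
    intro j
    calc (∑ i, P i * w' i j)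
        = ∑ i, ∑ m, Fp m * ((D m i - D i m) * w' i j) := by
          refine Finset.sum_congr rfl fun i _ => ?_
          simp only [hP, Finset.sum_mul]
          exact Finset.sum_congr rfl (fun m _ => by ring)
      _ = ∑ m, Fp m * ∑ i, (D m i - D i m) * w' i j := by
          rw [Finset.sum_comm]
          exact Finset.sum_congr rfl fun m _ => (Finset.mul_sum ..).symm
      _ = ∑ m, Fp m * (if m = j then (1:ℝ) else 0) :=
          Finset.sum_congr rfl fun m _ => by rw [hR]
      _ = Fp j := by simp
  have hPB : ∑ i, ∑ j, P i * w' i j * B j = ∑ j, Fp j * B j := by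
    rw [Finset.sum_comm]
    refine Finset.sum_congr rfl fun j _ => ?_
    rw [← Finset.sum_mul, hPw]
  have expand : ∑ i, ∑ j, w' i j * (A i - P i) * (B j - Q j)
      = (∑ i, ∑ j, A i * w' i j * B j) + (∑ i, A i * Gp i)
        - (∑ j, Fp j * B j) - (∑ i, P i * Gp i) := by
    have h1 : ∀ i, ∑ j, w' i j * (A i - P i) * (B j - Q j)
        = (∑ j, A i * w' i j * B j) - A i * (∑ j, w' i j * Q j)
          - (∑ j, P i * w' i j * B j) + P i * (∑ j, w' i j * Q j) := by
      intro i
      rw [Finset.mul_sum, Finset.mul_sum]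
      rw [← Finset.sum_sub_distrib, ← Finset.sum_sub_distrib, ← Finset.sum_add_distrib]
      exact Finset.sum_congr rfl (fun j _ => by ring)
    calc ∑ i, ∑ j, w' i j * (A i - P i) * (B j - Q j)
        = ∑ i, ((∑ j, A i * w' i j * B j) + A i * Gp i
            - (∑ j, P i * w' i j * B j) - P i * Gp i) := by
          refine Finset.sum_congr rfl fun i _ => ?_
          rw [h1 i, hwQ i]; ring
      _ = (∑ i, ∑ j, A i * w' i j * B j) + (∑ i, A i * Gp i)
            - (∑ i, ∑ j, P i * w' i j * B j) - (∑ i, P i * Gp i) := by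
          simp only [Finset.sum_sub_distrib, Finset.sum_add_distrib]
      _ = _ := by rw [hPB]
  have cross : ∑ i, (∑ m, D i m * Fp m) * Gp i = ∑ i, Fp i * (∑ m, D m i * Gp m) := by
    calc ∑ i, (∑ m, D i m * Fp m) * Gp i
        = ∑ i, ∑ m, D i m * Fp m * Gp i :=
          Finset.sum_congr rfl fun i _ => Finset.sum_mul ..
      _ = ∑ m, ∑ i, D i m * Fp m * Gp i := Finset.sum_comm
      _ = ∑ m, Fp m * (∑ i, D i m * Gp i) := by
          refine Finset.sum_congr rfl fun m _ => ?_
          rw [Finset.mul_sum]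
          exact Finset.sum_congr rfl (fun i _ => by ring)
  have final : (∑ i, A i * Gp i) - (∑ j, Fp j * B j) - (∑ i, P i * Gp i)
      = ∑ i, (Fx i * Gp i - Fp i * Gx i) := by
    calc (∑ i, A i * Gp i) - (∑ j, Fp j * B j) - (∑ i, P i * Gp i)
        = ∑ i, ((A i - P i) * Gp i - Fp i * B i) := by
          simp only [sub_mul, Finset.sum_sub_distrib]; ring
      _ = ∑ i, ((Fx i + ∑ m, D i m * Fp m) * Gp i
            - Fp i * (Gx i + ∑ m, D m i * Gp m)) := by
          refine Finset.sum_congr rfl fun i _ => ?_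
          rw [hAP]
      _ = (∑ i, (Fx i * Gp i - Fp i * Gx i))
            + ((∑ i, (∑ m, D i m * Fp m) * Gp i) - ∑ i, Fp i * (∑ m, D m i * Gp m)) := by
          simp only [← Finset.sum_sub_distrib, ← Finset.sum_add_distrib]
          exact Finset.sum_congr rfl (fun i _ => by ring)
      _ = ∑ i, (Fx i * Gp i - Fp i * Gx i) := by rw [cross]; ring
  calc (∑ i, (Fx i * Gp i - Fp i * Gx i))
        + ∑ i, ∑ j, A i * w' i j * B j
      = ∑ i, ∑ j, w' i j * (A i - P i) * (B j - Q j) := by rw [expand, ← final]; ring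
    _ = ∑ i, ∑ j, w' i j * (Fx i + ∑ m, D i m * Fp m) * (Gx j + ∑ m, D j m * Gp m) :=
        Finset.sum_congr rfl fun i _ => Finset.sum_congr rfl fun j _ => by
          rw [hAP, hBQ]

lemma clm_pair {N : ℕ} (L : ((Fin N → ℝ) × (Fin N → ℝ)) →L[ℝ] ℝ) (v w : Fin N → ℝ) :
    L (v, w) = L (v, 0) + L (0, w) := by
  rw [← map_add]
  congr 1
  simp [Prod.ext_iff]

lemma clm_second_sum {N : ℕ} (L : ((Fin N → ℝ) × (Fin N → ℝ)) →L[ℝ] ℝ) (w : Fin N → ℝ) :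
    L (0, w) = ∑ m, w m * L (0, Pi.single m 1) := by
  have h : ((0, w) : (Fin N → ℝ) × (Fin N → ℝ))
      = ∑ m, (w m) • ((0, Pi.single m 1) : (Fin N → ℝ) × (Fin N → ℝ)) := by
    have hs : ∀ m : Fin N, (w m • ((0, Pi.single m 1) : (Fin N → ℝ) × (Fin N → ℝ)))
        = ((0, Pi.single m (w m)) : (Fin N → ℝ) × (Fin N → ℝ)) := by
      intro m
      rw [Prod.smul_mk, smul_zero, ← Pi.single_smul, smul_eq_mul, mul_one]
    rw [Finset.sum_congr rfl (fun m _ => hs m), Prod.ext_iff]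
    refine ⟨by simp [Prod.fst_sum], ?_⟩
    simp only [Prod.snd_sum]
    rw [Finset.univ_sum_single]
  rw [h, map_sum]
  exact Finset.sum_congr rfl fun m _ => by rw [map_smul]; simp [smul_eq_mul]

lemma pd_comp {N : ℕ} {f : (Fin N → ℝ) × (Fin N → ℝ) → ℝ} {ρ : Fin N → (Fin N → ℝ) → ℝ}
    {x : Fin N → ℝ}
    (hf : DifferentiableAt ℝ f (x, fun m => ρ m x))
    (hρ : ∀ m, DifferentiableAt ℝ (ρ m) x) (i : Fin N) :
    pd i (fun x' => f (x', fun m => ρ m x')) x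
      = pdx i f (x, fun m => ρ m x)
        + ∑ m, pd i (ρ m) x * pdp m f (x, fun m => ρ m x) := by
  have hψ : DifferentiableAt ℝ (fun x' => (fun m => ρ m x' : Fin N → ℝ)) x :=
    differentiableAt_pi.2 hρ
  have hφ : DifferentiableAt ℝ
      (fun x' => ((x', fun m => ρ m x') : (Fin N → ℝ) × (Fin N → ℝ))) x :=
    differentiableAt_fun_id.prodMk hψ
  have hcomp : fderiv ℝ (fun x' => f (x', fun m => ρ m x')) x
      = (fderiv ℝ f (x, fun m => ρ m x)).comp
          (fderiv ℝ (fun x' => ((x', fun m => ρ m x') : (Fin N → ℝ) × (Fin N → ℝ))) x) :=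
    fderiv_comp x hf hφ
  have hφ' : fderiv ℝ (fun x' => ((x', fun m => ρ m x') : (Fin N → ℝ) × (Fin N → ℝ))) x
      = (ContinuousLinearMap.id ℝ (Fin N → ℝ)).prod
          (ContinuousLinearMap.pi fun m => fderiv ℝ (ρ m) x) := by
    rw [DifferentiableAt.fderiv_prodMk differentiableAt_fun_id hψ, fderiv_id', fderiv_pi hρ]
  rw [pd, hcomp, hφ', ContinuousLinearMap.comp_apply]
  simp only [ContinuousLinearMap.prod_apply, ContinuousLinearMap.coe_id', id_eq,
    ContinuousLinearMap.pi_apply]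
  rw [clm_pair, clm_second_sum]
  rfl

lemma theta_hasFDeriv {N : ℕ} {ρi : (Fin N → ℝ) → ℝ} {x p : Fin N → ℝ}
    (h : DifferentiableAt ℝ ρi x) (i : Fin N) :
    HasFDerivAt (fun z : (Fin N → ℝ) × (Fin N → ℝ) => ρi z.1 - z.2 i)
      ((fderiv ℝ ρi x).comp (ContinuousLinearMap.fst ℝ (Fin N → ℝ) (Fin N → ℝ))
        - (ContinuousLinearMap.proj i).comp
            (ContinuousLinearMap.snd ℝ (Fin N → ℝ) (Fin N → ℝ))) (x, p) :=
  (h.hasFDerivAt.comp (x, p) hasFDerivAt_fst).sub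
    (((ContinuousLinearMap.proj i).comp
        (ContinuousLinearMap.snd ℝ (Fin N → ℝ) (Fin N → ℝ))).hasFDerivAt)

lemma theta_pdx {N : ℕ} {ρi : (Fin N → ℝ) → ℝ} {x p : Fin N → ℝ}
    (h : DifferentiableAt ℝ ρi x) (i j : Fin N) :
    pdx j (fun z : (Fin N → ℝ) × (Fin N → ℝ) => ρi z.1 - z.2 i) (x, p) = pd j ρi x := by
  rw [pdx, (theta_hasFDeriv h i).fderiv]
  simp [pd]

lemma theta_pdp {N : ℕ} {ρi : (Fin N → ℝ) → ℝ} {x p : Fin N → ℝ}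
    (h : DifferentiableAt ℝ ρi x) (i j : Fin N) :
    pdp j (fun z : (Fin N → ℝ) × (Fin N → ℝ) => ρi z.1 - z.2 i) (x, p)
      = -(if i = j then (1:ℝ) else 0) := by
  rw [pdp, (theta_hasFDeriv h i).fderiv]
  simp [Pi.single_apply]


theorem dirac_bracket_reduces_to_base_poisson_bracket
    (N : ℕ) (hN : 1 ≤ N) (U : Set (Fin N → ℝ)) (hU : IsOpen U)
    (ρ : Fin N → (Fin N → ℝ) → ℝ)
    (hρ_smooth : ∀ i, ContDiffOn ℝ (⊤ : ℕ∞) (ρ i) U)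
    (ω ω' : Fin N → Fin N → (Fin N → ℝ) → ℝ)
    (hω : ∀ i j x, ω i j x = pd i (ρ j) x - pd j (ρ i) x)
    (hω_inv : ∀ i k, ∀ x ∈ U, (∑ j, ω' i j x * ω j k x) = if i = k then (1:ℝ) else 0)
    (θ : Fin N → (Fin N → ℝ) × (Fin N → ℝ) → ℝ)
    (hθ : ∀ i z, θ i z = ρ i z.1 - z.2 i)
    (f g : (Fin N → ℝ) × (Fin N → ℝ) → ℝ)
    (hf : ContDiffOn ℝ (⊤ : ℕ∞) f (U ×ˢ (Set.univ : Set (Fin N → ℝ))))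
    (hg : ContDiffOn ℝ (⊤ : ℕ∞) g (U ×ˢ (Set.univ : Set (Fin N → ℝ)))) :
    ∀ x ∈ U,
      diracPB ω' θ f g (x, fun i => ρ i x) =
        ∑ i, ∑ j, ω' i j x
          * pd i (fun x' => f (x', fun m => ρ m x')) x
          * pd j (fun x' => g (x', fun m => ρ m x')) x := by
  have hθfun : θ = fun i z => ρ i z.1 - z.2 i := funext fun i => funext fun z => hθ i z
  subst hθfun
  intro x hx
  have hz : ((x, fun m => ρ m x) : (Fin N → ℝ) × (Fin N → ℝ))
      ∈ U ×ˢ (Set.univ : Set (Fin N → ℝ)) := ⟨hx, trivial⟩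
  have hop : IsOpen (U ×ˢ (Set.univ : Set (Fin N → ℝ))) := hU.prod isOpen_univ
  have hfd : DifferentiableAt ℝ f (x, fun m => ρ m x) :=
    (hf.contDiffAt (hop.mem_nhds hz)).differentiableAt (by simp)
  have hgd : DifferentiableAt ℝ g (x, fun m => ρ m x) :=
    (hg.contDiffAt (hop.mem_nhds hz)).differentiableAt (by simp)
  have hρd : ∀ m, DifferentiableAt ℝ (ρ m) x := fun m =>
    ((hρ_smooth m).contDiffAt (hU.mem_nhds hx)).differentiableAt (by simp)
  -- brackets with the constraints
  have hcfθ : ∀ i, canPB f (fun z => ρ i z.1 - z.2 i) (x, fun m => ρ m x)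
      = -(pdx i f (x, fun m => ρ m x)
          + ∑ j, pdp j f (x, fun m => ρ m x) * pd j (ρ i) x) := by
    intro i
    simp only [canPB, theta_pdx (hρd i) i, theta_pdp (hρd i) i]
    rw [Finset.sum_sub_distrib]
    have h1 : ∑ j, pdx j f (x, fun m => ρ m x) * -(if i = j then (1:ℝ) else 0)
        = -pdx i f (x, fun m => ρ m x) := by simp
    rw [h1]; ring
  have hcθg : ∀ j, canPB (fun z => ρ j z.1 - z.2 j) g (x, fun m => ρ m x)
      = pdx j g (x, fun m => ρ m x)
        + ∑ m, pd m (ρ j) x * pdp m g (x, fun m => ρ m x) := by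
    intro j
    simp only [canPB, theta_pdx (hρd j) j, theta_pdp (hρd j) j]
    rw [Finset.sum_sub_distrib]
    have h1 : ∑ m, (-(if j = m then (1:ℝ) else 0)) * pdx m g (x, fun m => ρ m x)
        = -pdx j g (x, fun m => ρ m x) := by simp
    rw [h1]; ring
  -- the inverse matrix identities
  have hL : ∀ i l, (∑ j, ω' i j x * (pd l (ρ j) x - pd j (ρ l) x))
      = -(if i = l then (1:ℝ) else 0) := by
    intro i l
    rw [← hω_inv i l x hx, ← Finset.sum_neg_distrib]
    refine Finset.sum_congr rfl fun j _ => ?_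
    rw [hω j l x]
    ring
  have hR : ∀ k j, (∑ i, (pd k (ρ i) x - pd i (ρ k) x) * ω' i j x)
      = if k = j then (1:ℝ) else 0 := by
    have h1 : (Matrix.of fun a b => ω' a b x) * (Matrix.of fun a b => ω a b x) = 1 := by
      ext i k
      rw [Matrix.mul_apply, Matrix.one_apply]
      exact hω_inv i k x hx
    have h2 := mul_eq_one_comm.mp h1
    intro k j
    have h3 := congrFun (congrFun h2 k) j
    rw [Matrix.mul_apply, Matrix.one_apply] at h3
    rw [← h3]
    refine Finset.sum_congr rfl fun i _ => ?_
    rw [Matrix.of_apply, Matrix.of_apply, hω k i x]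
  -- assemble
  simp only [diracPB]
  simp only [hcfθ, hcθg, pd_comp hfd hρd, pd_comp hgd hρd]
  simp only [canPB]
  have hneg : ∑ i, ∑ j,
      -(pdx i f (x, fun m => ρ m x) + ∑ l, pdp l f (x, fun m => ρ m x) * pd l (ρ i) x)
        * ω' i j x
        * (pdx j g (x, fun m => ρ m x) + ∑ m, pd m (ρ j) x * pdp m g (x, fun m => ρ m x))
      = -∑ i, ∑ j,
      (pdx i f (x, fun m => ρ m x) + ∑ l, pdp l f (x, fun m => ρ m x) * pd l (ρ i) x)
        * ω' i j x
        * (pdx j g (x, fun m => ρ m x) + ∑ m, pd m (ρ j) x * pdp m g (x, fun m => ρ m x)) := by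
    rw [← Finset.sum_neg_distrib]
    refine Finset.sum_congr rfl fun i _ => ?_
    rw [← Finset.sum_neg_distrib]
    exact Finset.sum_congr rfl fun j _ => by ring
  rw [hneg, sub_neg_eq_add]
  exact key_alg (fun i => pdx i f (x, fun m => ρ m x)) (fun i => pdp i f (x, fun m => ρ m x))
    (fun j => pdx j g (x, fun m => ρ m x)) (fun j => pdp j g (x, fun m => ρ m x))
    (fun i j => pd i (ρ j) x) (fun i j => ω' i j x) hL hR
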